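/- arXiv:1910.06923 — 2 statements merged into one kernel-verified Lean document; each statement's English description precedes it below -/
import Mathlib

section
/- No MASA of B(ℓ²ₙ) (2 ≤ n < ∞) is flat: for any MASA A in the n×n matrices Mₙ(ℂ), there is no unitary u making all states of a 1/2-dense finite set F of states nearly equal on uAu*. Concretely, if F is a finite 1/2-dense set of states on Mₙ(ℂ), then for every MASA A there exist φ', ψ' ∈ F with ‖(φ' − ψ')|_A‖ ≥ 1. -/
/-!
A MASA `A` of `B(H)`, `1 < dim H < ∞`, contains a nontrivial projection `p`: an eigenprojection
of a non-scalar element of `A` (it lies in `A'' = A` since the eigenspace is invariant under the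
commutative algebra `A`), or any projection at all when `A` consists of scalars, since then
`A = A' = B(H)`. The symmetry `s = 2p - 1 ∈ A` has norm one and unit eigenvectors `ξ, η` with
eigenvalues `1, -1`, so the vector states `ω_ξ, ω_η` differ by `2` at `s`. The elements of `F`
within `1/2` of them therefore still differ by at least `1` at `s`.
-/

open scoped InnerProductSpace

namespace ErgodicEmbeddings

variable {H : Type*} [NormedAddCommGroup H] [InnerProductSpace ℂ H] [CompleteSpace H]

/-- The bounded functional on `B(H)` given by `x ↦ ⟪η, x ξ⟫`. -/
noncomputable def vecFunc (ξ η : H) : (H →L[ℂ] H) →L[ℂ] ℂ :=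
  (innerSL ℂ η).comp (ContinuousLinearMap.apply ℂ H ξ)

/-- A bounded functional on `B(H)` is *normal* if it lies in the norm closure of the
linear span of the vector functionals (i.e. it comes from a trace-class operator). -/
def IsNormalFunctional (φ : (H →L[ℂ] H) →L[ℂ] ℂ) : Prop :=
  φ ∈ closure (Submodule.span ℂ (Set.range fun p : H × H => vecFunc p.1 p.2) : Set _)

/-- A normal state. -/
def IsNormalState (φ : (H →L[ℂ] H) →L[ℂ] ℂ) : Prop :=
  IsNormalFunctional φ ∧ φ 1 = 1 ∧ ∀ x : H →L[ℂ] H, 0 ≤ (φ (star x * x)).re ∧ (φ (star x * x)).im = 0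

/-- The functional `u·φ·u* : x ↦ φ (u* x u)`. -/
noncomputable def conjFunc (u : H →L[ℂ] H) (φ : (H →L[ℂ] H) →L[ℂ] ℂ) :
    (H →L[ℂ] H) →L[ℂ] ℂ :=
  φ.comp (((ContinuousLinearMap.mul ℂ (H →L[ℂ] H)) (star u)).comp
    ((ContinuousLinearMap.mul ℂ (H →L[ℂ] H)).flip u))

/-- Norm of the restriction of a functional to a subset (over its unit ball). -/
noncomputable def restNorm (φ : (H →L[ℂ] H) →L[ℂ] ℂ) (A : Set (H →L[ℂ] H)) : ℝ :=
  sSup {r : ℝ | ∃ x ∈ A, ‖x‖ ≤ 1 ∧ r = ‖φ x‖}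

/-- A unitary element of the von Neumann algebra `M`. -/
def IsUnitaryIn (M : VonNeumannAlgebra H) (u : H →L[ℂ] H) : Prop :=
  u ∈ M ∧ star u * u = 1 ∧ u * star u = 1

/-- `y` belongs to the closure of `S` in the weak operator topology. -/
def InWOTClosure (S : Set (H →L[ℂ] H)) (y : H →L[ℂ] H) : Prop :=
  ∀ (F : Finset (H × H)) (ε : ℝ), 0 < ε →
    ∃ z ∈ S, ∀ p ∈ F, ‖⟪p.2, (z - y) p.1⟫_ℂ‖ < ε

/-- The set of `Ad`-conjugates of `x` by unitaries of `M`. -/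
def unitaryConjugates (M : VonNeumannAlgebra H) (x : H →L[ℂ] H) : Set (H →L[ℂ] H) :=
  {z | ∃ u : H →L[ℂ] H, IsUnitaryIn M u ∧ z = u * x * star u}

/-- The inclusion `M ⊆ 𝓜` is *MV-ergodic* if for every `x ∈ 𝓜` the weak closure of the
convex hull of the unitary conjugates of `x` by unitaries of `M` contains a scalar. -/
def MVErgodic (M 𝓜 : VonNeumannAlgebra H) : Prop :=
  ∀ x ∈ 𝓜, ∃ c : ℂ, InWOTClosure (convexHull ℝ (unitaryConjugates M x)) (c • (1 : H →L[ℂ] H))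

/-- `M` is a factor: its center consists of the scalars. -/
def IsFactor (M : VonNeumannAlgebra H) : Prop :=
  ∀ x ∈ M, x ∈ M.commutant → ∃ c : ℂ, x = c • (1 : H →L[ℂ] H)

/-- Orthogonal projection onto the closure of `{a ξ | a ∈ S}`'s linear span. -/
noncomputable def cycProj (S : Set (H →L[ℂ] H)) (ξ : H) : H →L[ℂ] H :=
  haveI : CompleteSpace (Submodule.span ℂ ((fun a : H →L[ℂ] H => a ξ) '' S)).topologicalClosure :=
    (Submodule.span ℂ ((fun a : H →L[ℂ] H => a ξ) '' S)).isClosed_topologicalClosure.completeSpace_coe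
  (Submodule.span ℂ ((fun a : H →L[ℂ] H => a ξ) '' S)).topologicalClosure.subtypeL.comp
    (Submodule.orthogonalProjection (Submodule.span ℂ ((fun a : H →L[ℂ] H => a ξ) '' S)).topologicalClosure)

/-- The von Neumann algebra generated by a self-adjoint unital set: its double commutant. -/
def vnGen (S : Set (H →L[ℂ] H)) : Set (H →L[ℂ] H) :=
  Set.centralizer (Set.centralizer S)

end ErgodicEmbeddings

lemma ContinuousLinearMap.norm_sub_apply_le {𝕜 E F : Type*} [NontriviallyNormedField 𝕜]
    [SeminormedAddCommGroup E] [SeminormedAddCommGroup F] [NormedSpace 𝕜 E] [NormedSpace 𝕜 F]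
    (f g φ ψ : E →L[𝕜] F) {a : E} (ha : ‖a‖ ≤ 1) :
    ‖(f - g) a‖ ≤ ‖f - φ‖ + ‖g - ψ‖ + ‖(φ - ψ) a‖ := by
  have hf := (f - φ).unit_le_opNorm a ha
  have hg := (g - ψ).unit_le_opNorm a ha
  calc ‖(f - g) a‖ = ‖(f - φ) a - (g - ψ) a + (φ - ψ) a‖ := by simp only [sub_apply]; abel_nf
    _ ≤ ‖(f - φ) a‖ + ‖(g - ψ) a‖ + ‖(φ - ψ) a‖ := by
        linarith [norm_add_le ((f - φ) a - (g - ψ) a) ((φ - ψ) a),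
          norm_sub_le ((f - φ) a) ((g - ψ) a)]
    _ ≤ _ := by linarith

lemma Submodule.exists_mem_norm_eq_one {E : Type*} [NormedAddCommGroup E] [NormedSpace ℂ E]
    {K : Submodule ℂ E} (hK : K ≠ ⊥) : ∃ v ∈ K, ‖v‖ = 1 := by
  obtain ⟨w, hwK, hw⟩ := K.exists_mem_ne_zero_of_ne_bot hK
  exact ⟨(‖w‖ : ℂ)⁻¹ • w, K.smul_mem _ hwK, norm_smul_inv_norm hw⟩

lemma Submodule.reflection_toContinuousLinearMap {E : Type*} [NormedAddCommGroup E]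
    [InnerProductSpace ℂ E] (K : Submodule ℂ E) [K.HasOrthogonalProjection] :
    K.reflection.toLinearIsometry.toContinuousLinearMap = (2 : ℂ) • K.starProjection - 1 := by
  ext v
  simp [reflection_apply, two_smul]

namespace ErgodicEmbeddings

variable {H : Type*} [NormedAddCommGroup H] [InnerProductSpace ℂ H]

lemma vecFunc_apply (ξ η : H) (x : H →L[ℂ] H) : vecFunc ξ η x = ⟪η, x ξ⟫_ℂ := rfl

lemma vecFunc_self_apply_of_apply_eq_smul {ξ : H} (hξ : ‖ξ‖ = 1) {x : H →L[ℂ] H} {c : ℂ}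
    (hx : x ξ = c • ξ) : vecFunc ξ ξ x = c := by
  rw [vecFunc_apply, hx, inner_smul_right, inner_self_eq_norm_sq_to_K, hξ]
  simp

lemma norm_apply_le_restNorm (φ : (H →L[ℂ] H) →L[ℂ] ℂ) {A : Set (H →L[ℂ] H)}
    {x : H →L[ℂ] H} (hxA : x ∈ A) (hx : ‖x‖ ≤ 1) : ‖φ x‖ ≤ restNorm φ A := by
  refine le_csSup ⟨‖φ‖, ?_⟩ ⟨x, hxA, hx, rfl⟩
  rintro r ⟨y, -, hy, rfl⟩
  exact φ.unit_le_opNorm y hy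

section

open Module Module.End

variable [CompleteSpace H] {A : VonNeumannAlgebra H}

lemma isNormalState_vecFunc {ξ : H} (hξ : ‖ξ‖ = 1) : IsNormalState (vecFunc ξ ξ) := by
  refine ⟨subset_closure (Submodule.subset_span ⟨(ξ, ξ), rfl⟩),
    vecFunc_self_apply_of_apply_eq_smul hξ (one_smul ℂ ξ).symm, fun x => ?_⟩
  have hx : vecFunc ξ ξ (star x * x) = ⟪x ξ, x ξ⟫_ℂ := x.adjoint_inner_right ξ (x ξ)
  rw [hx]
  exact ⟨inner_self_nonneg (𝕜 := ℂ), inner_self_im (𝕜 := ℂ) (x ξ)⟩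

def IsMASA (A : VonNeumannAlgebra H) : Prop :=
  (A.commutant : Set (H →L[ℂ] H)) = A

namespace IsMASA

lemma commute (hA : IsMASA A) {a b : H →L[ℂ] H} (ha : a ∈ A) (hb : b ∈ A) : Commute a b := by
  have hb' : b ∈ A.commutant := by rw [← SetLike.mem_coe, hA]; exact hb
  exact VonNeumannAlgebra.mem_commutant_iff.mp hb' a ha

lemma mem_of_forall_eq_smul_one (hA : IsMASA A) (hA1 : ∀ a ∈ A, ∃ c : ℂ, a = c • 1)
    (x : H →L[ℂ] H) : x ∈ A := by
  rw [← SetLike.mem_coe, ← hA, SetLike.mem_coe, VonNeumannAlgebra.mem_commutant_iff]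
  intro g hg
  obtain ⟨c, rfl⟩ := hA1 g hg
  rw [smul_mul_assoc, mul_smul_comm, one_mul, mul_one]

lemma starProjection_mem (hA : IsMASA A) {K : Submodule ℂ H} [K.HasOrthogonalProjection]
    (hK : ∀ a ∈ A, K ∈ invtSubmodule (a : H →ₗ[ℂ] H)) : K.starProjection ∈ A := by
  rw [VonNeumannAlgebra.IsStarProjection.mem_iff isStarProjection_starProjection,
    Submodule.range_starProjection]
  intro y hy
  rw [← SetLike.mem_coe, hA] at hy
  exact hK y hy

lemma starProjection_eigenspace_mem [FiniteDimensional ℂ H] (hA : IsMASA A)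
    {a : H →L[ℂ] H} (ha : a ∈ A) (μ : ℂ) : (eigenspace (a : H →ₗ[ℂ] H) μ).starProjection ∈ A :=
  hA.starProjection_mem fun _ hb => (mem_invtSubmodule_iff_mapsTo _).mpr <|
    mapsTo_genEigenspace_of_comm
      (congrArg ContinuousLinearMap.toLinearMap (hA.commute ha hb).eq) μ 1

theorem exists_starProjection_mem [FiniteDimensional ℂ H] (hA : IsMASA A)
    (hH : 1 < finrank ℂ H) : ∃ K : Submodule ℂ H, K ≠ ⊥ ∧ K ≠ ⊤ ∧ K.starProjection ∈ A := by
  have : Nontrivial H := Module.nontrivial_of_finrank_pos (zero_lt_one.trans hH)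
  by_cases hA1 : ∀ a ∈ A, ∃ c : ℂ, a = c • 1
  · obtain ⟨v, hv⟩ := exists_ne (0 : H)
    refine ⟨ℂ ∙ v, by simpa using hv, fun htop => ?_, hA.mem_of_forall_eq_smul_one hA1 _⟩
    have := finrank_span_singleton (K := ℂ) hv
    rw [htop, finrank_top] at this
    omega
  · push Not at hA1
    obtain ⟨a, ha, hna⟩ := hA1
    obtain ⟨μ, hμ⟩ := exists_eigenvalue (a : H →ₗ[ℂ] H)
    refine ⟨_, hμ, fun (htop : eigenspace (a : H →ₗ[ℂ] H) μ = ⊤) => hna μ ?_,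
      hA.starProjection_eigenspace_mem ha μ⟩
    ext v
    have hv : v ∈ eigenspace (a : H →ₗ[ℂ] H) μ := by rw [htop]; trivial
    simpa using mem_eigenspace_iff.mp hv

end IsMASA

lemma reflection_mem_of_starProjection_mem {K : Submodule ℂ H} [K.HasOrthogonalProjection]
    (hK : K.starProjection ∈ A) : K.reflection.toLinearIsometry.toContinuousLinearMap ∈ A := by
  rw [Submodule.reflection_toContinuousLinearMap]
  exact A.sub_mem (A.smul_mem hK _) A.one_mem

theorem IsMASA.exists_symmetry_mem [FiniteDimensional ℂ H] (hA : IsMASA A)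
    (hH : 1 < finrank ℂ H) :
    ∃ s ∈ A, ‖s‖ ≤ 1 ∧ ∃ ξ η : H, ‖ξ‖ = 1 ∧ ‖η‖ = 1 ∧ s ξ = ξ ∧ s η = -η := by
  obtain ⟨K, hK, hK', hKA⟩ := hA.exists_starProjection_mem hH
  obtain ⟨ξ, hξK, hξ⟩ := Submodule.exists_mem_norm_eq_one hK
  obtain ⟨η, hηK, hη⟩ :=
    Submodule.exists_mem_norm_eq_one (mt Submodule.orthogonal_eq_bot_iff.mp hK')
  exact ⟨_, reflection_mem_of_starProjection_mem hKA,
    LinearIsometry.norm_toContinuousLinearMap_le _, ξ, η, hξ, hη,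
    K.reflection_mem_subspace_eq_self hξK,
    K.reflection_mem_subspace_orthogonalComplement_eq_neg hηK⟩

end

theorem masa_in_matrix_factor_not_flat_general (n : ℕ) (hn : 2 ≤ n)
    (F : Finset ((EuclideanSpace ℂ (Fin n) →L[ℂ] EuclideanSpace ℂ (Fin n)) →L[ℂ] ℂ))
    (hFdense : ∀ ω : (EuclideanSpace ℂ (Fin n) →L[ℂ] EuclideanSpace ℂ (Fin n)) →L[ℂ] ℂ,
      IsNormalState ω → ∃ χ ∈ F, ‖ω - χ‖ ≤ 1 / 2)
    (A : VonNeumannAlgebra (EuclideanSpace ℂ (Fin n)))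
    (hMASA : (↑A.commutant : Set (EuclideanSpace ℂ (Fin n) →L[ℂ] EuclideanSpace ℂ (Fin n)))
      = A) :
    ∃ φ' ∈ F, ∃ ψ' ∈ F,
      1 ≤ restNorm (φ' - ψ')
        (A : Set (EuclideanSpace ℂ (Fin n) →L[ℂ] EuclideanSpace ℂ (Fin n))) := by
  obtain ⟨s, hsA, hs, ξ, η, hξ, hη, hsξ, hsη⟩ :=
    IsMASA.exists_symmetry_mem hMASA (by rwa [finrank_euclideanSpace_fin])
  obtain ⟨φ', hφ'F, hφ'⟩ := hFdense _ (isNormalState_vecFunc hξ)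
  obtain ⟨ψ', hψ'F, hψ'⟩ := hFdense _ (isNormalState_vecFunc hη)
  refine ⟨φ', hφ'F, ψ', hψ'F, le_trans ?_ (norm_apply_le_restNorm _ hsA hs)⟩
  have hξs : vecFunc ξ ξ s = 1 := vecFunc_self_apply_of_apply_eq_smul hξ (by rw [hsξ, one_smul])
  have hηs : vecFunc η η s = -1 :=
    vecFunc_self_apply_of_apply_eq_smul hη (by rw [hsη, neg_one_smul])
  have h2 : ‖(vecFunc ξ ξ - vecFunc η η) s‖ = 2 := by
    rw [sub_apply, hξs, hηs]
    norm_num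
  linarith [(vecFunc ξ ξ).norm_sub_apply_le (vecFunc η η) φ' ψ' hs]

/-- Theorem 5.5, 2°, finite dimensional case: no MASA of a finite type I
factor `B(ℓ²ₙ)`, `2 ≤ n < ∞`, is flat. -/
theorem masa_in_matrix_factor_not_flat (n : ℕ) (hn : 2 ≤ n)
    (F : Finset ((EuclideanSpace ℂ (Fin n) →L[ℂ] EuclideanSpace ℂ (Fin n)) →L[ℂ] ℂ))
    (hFstates : ∀ φ ∈ F, IsNormalState φ)
    (hFdense : ∀ ω : (EuclideanSpace ℂ (Fin n) →L[ℂ] EuclideanSpace ℂ (Fin n)) →L[ℂ] ℂ,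
      IsNormalState ω → ∃ χ ∈ F, ‖ω - χ‖ ≤ 1 / 2)
    (A : VonNeumannAlgebra (EuclideanSpace ℂ (Fin n)))
    (hMASA : (↑A.commutant : Set (EuclideanSpace ℂ (Fin n) →L[ℂ] EuclideanSpace ℂ (Fin n)))
      = A) :
    ∃ φ' ∈ F, ∃ ψ' ∈ F,
      1 ≤ restNorm (φ' - ψ')
        (A : Set (EuclideanSpace ℂ (Fin n) →L[ℂ] EuclideanSpace ℂ (Fin n))) :=
  masa_in_matrix_factor_not_flat_general n hn F hFdense A hMASA

end ErgodicEmbeddings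
end

section
/- Let B₀ be a UHF C*-algebra with unique trace τ, obtained as the inductive limit of matrix factors B_{0,n} ≅ M_{kₙ}(ℂ), represented on a separable Hilbert space H. If B₀'' is the hyperfinite II₁ factor, then for every unit vector ξ ∈ H the vector state φ = ⟨·ξ, ξ⟩ satisfies limₙ ‖(τ − φ)|_{B_{0,n}' ∩ B₀}‖ = 0. -/
/-!
Suppose the conclusion fails: then there are `ε > 0` and `xₙ ∈ Bₙ' ∩ B₀` with `‖xₙ‖ ≤ 1` on which
`τ` and the vector state of `ξ` differ by more than `ε`. Along an ultrafilter finer than `atTop` the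
`xₙ` have a weak-operator limit `T`. Each element of `B_m` commutes with `xₙ` for `n ≥ m`, so `T`
commutes with `B₀`; every element of `B₀'` commutes with all `xₙ`, so `T ∈ B₀''`. Hence `T` is
central in the factor `B₀''`, i.e. `T = c • 1`. Normal functionals are weak-operator continuous on
bounded sets, so both `τ (xₙ)` and `⟪ξ, xₙ ξ⟫` tend to `c` along the ultrafilter: a contradiction.
-/

open scoped InnerProductSpace

open Filter Topology

theorem Ultrafilter.exists_tendsto_of_norm_le {ι E : Type*} [NormedAddCommGroup E] [ProperSpace E]
    (U : Ultrafilter ι) {f : ι → E} {C : ℝ} (hf : ∀ i, ‖f i‖ ≤ C) :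
    ∃ z, Tendsto f U (𝓝 z) := by
  obtain ⟨z, -, hz⟩ := (isCompact_closedBall (0 : E) C).ultrafilter_le_nhds (U.map f)
    (le_principal_iff.2 <| mem_map.2 <| univ_mem' fun i => mem_closedBall_zero_iff.2 (hf i))
  exact ⟨z, hz⟩

theorem isClosed_setOf_tendsto_apply {𝕜 E F ι : Type*} [NontriviallyNormedField 𝕜]
    [NormedAddCommGroup E] [NormedSpace 𝕜 E] [NormedAddCommGroup F] [NormedSpace 𝕜 F]
    {l : Filter ι} {x : ι → E} {y : E} {C : ℝ} (hx : ∀ i, ‖x i‖ ≤ C) :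
    IsClosed {φ : E →L[𝕜] F | Tendsto (fun i => φ (x i)) l (𝓝 (φ y))} := by
  refine isClosed_of_closure_subset fun φ hφ => Metric.tendsto_nhds.2 fun ε hε => ?_
  set K := max C 0 + ‖y‖
  have hK : 0 < K + 1 := by positivity
  obtain ⟨ψ, hψ, hφψ⟩ := Metric.mem_closure_iff.1 hφ (ε / (2 * (K + 1))) (by positivity)
  rw [dist_eq_norm] at hφψ
  filter_upwards [Metric.tendsto_nhds.1 hψ (ε / 2) (half_pos hε)] with i hi
  have hsplit : φ (x i) - φ y = (φ - ψ) (x i - y) + (ψ (x i) - ψ y) := by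
    simp only [FunLike.coe_sub, Pi.sub_apply, map_sub]; abel
  have hxy : ‖x i - y‖ ≤ K :=
    (norm_sub_le _ _).trans (add_le_add_left ((hx i).trans (le_max_left _ _)) _)
  calc dist (φ (x i)) (φ y) = ‖(φ - ψ) (x i - y) + (ψ (x i) - ψ y)‖ := by
        rw [dist_eq_norm, hsplit]
    _ ≤ ‖φ - ψ‖ * (K + 1) + dist (ψ (x i)) (ψ y) :=
        norm_add_le_of_le ((φ - ψ).le_opNorm_of_le (by linarith)) (dist_eq_norm _ _).ge
    _ < ε / (2 * (K + 1)) * (K + 1) + ε / 2 := by gcongr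
    _ = ε := by field_simp; ring

section WeakOperatorLimits

variable {𝕜 E ι : Type*} [RCLike 𝕜] [NormedAddCommGroup E] [InnerProductSpace 𝕜 E]
  [CompleteSpace E]

open ContinuousLinearMap InnerProductSpace in
theorem exists_tendsto_inner_apply (U : Ultrafilter ι) {x : ι → E →L[𝕜] E} {C : ℝ}
    (hx : ∀ i, ‖x i‖ ≤ C) :
    ∃ T : E →L[𝕜] E, ∀ η ζ, Tendsto (fun i => ⟪η, x i ζ⟫_𝕜) U (𝓝 ⟪η, T ζ⟫_𝕜) := by
  have hbound : ∀ i η ζ, ‖⟪η, x i ζ⟫_𝕜‖ ≤ C * ‖η‖ * ‖ζ‖ := fun i η ζ =>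
    calc ‖⟪η, x i ζ⟫_𝕜‖ ≤ ‖η‖ * (‖x i‖ * ‖ζ‖) :=
          (norm_inner_le_norm _ _).trans (by gcongr; exact (x i).le_opNorm ζ)
      _ ≤ C * ‖η‖ * ‖ζ‖ := by nlinarith [hx i, mul_nonneg (norm_nonneg η) (norm_nonneg ζ)]
  choose L hL using fun η ζ => U.exists_tendsto_of_norm_le (hbound · η ζ)
  -- `L` is a bounded sesquilinear form; `T` is the adjoint of its Riesz representative.
  let B : E →L⋆[𝕜] E →L[𝕜] 𝕜 := (LinearMap.mk₂'ₛₗ (starRingEnd 𝕜) (RingHom.id 𝕜) L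
    (fun η η' ζ => tendsto_nhds_unique (hL _ _) <| by
      simpa only [inner_add_left] using (hL η ζ).add (hL η' ζ))
    (fun c η ζ => tendsto_nhds_unique (hL _ _) <| by
      simpa only [inner_smul_left, smul_eq_mul] using (hL η ζ).const_mul (starRingEnd 𝕜 c))
    (fun η ζ ζ' => tendsto_nhds_unique (hL _ _) <| by
      simpa only [map_add, inner_add_right] using (hL η ζ).add (hL η ζ'))
    (fun c η ζ => tendsto_nhds_unique (hL _ _) <| by
      simpa only [map_smul, inner_smul_right, RingHom.id_apply, smul_eq_mul] using
        (hL η ζ).const_mul c)).mkContinuous₂ C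
    fun η ζ => le_of_tendsto (hL η ζ).norm (Eventually.of_forall (hbound · η ζ))
  refine ⟨adjoint (continuousLinearMapOfBilin B), fun η ζ => ?_⟩
  rw [adjoint_inner_right, continuousLinearMapOfBilin_apply]
  exact hL η ζ

variable {l : Filter ι} {x : ι → E →L[𝕜] E} {T : E →L[𝕜] E}

open ContinuousLinearMap in
theorem Commute.of_tendsto_inner_apply [l.NeBot] {a : E →L[𝕜] E}
    (hT : ∀ η ζ, Tendsto (fun i => ⟪η, x i ζ⟫_𝕜) l (𝓝 ⟪η, T ζ⟫_𝕜))
    (ha : ∀ᶠ i in l, Commute a (x i)) : Commute a T := by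
  refine ContinuousLinearMap.ext fun ζ => ext_inner_left 𝕜 fun η => ?_
  change ⟪η, a (T ζ)⟫_𝕜 = ⟪η, T (a ζ)⟫_𝕜
  rw [← adjoint_inner_left]
  refine tendsto_nhds_unique (hT _ ζ) ((hT η (a ζ)).congr' ?_)
  filter_upwards [ha] with i hi
  rw [adjoint_inner_left, ← mul_apply_eq_comp, ← hi.eq]
  rfl

theorem mem_centralizer_closure_iUnion_of_tendsto_inner_apply {l : Filter ℕ} [l.NeBot]
    (hl : l ≤ atTop) {x : ℕ → E →L[𝕜] E} {S : ℕ → Set (E →L[𝕜] E)} (hS : Monotone S)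
    (hx : ∀ n, x n ∈ (S n).centralizer)
    (hT : ∀ η ζ, Tendsto (fun n => ⟪η, x n ζ⟫_𝕜) l (𝓝 ⟪η, T ζ⟫_𝕜)) :
    T ∈ (closure (⋃ n, S n)).centralizer := by
  have hunion : ⋃ n, S n ⊆ Set.centralizer {T} := by
    refine Set.iUnion_subset fun m a ha => ?_
    rintro _ rfl
    refine (Commute.of_tendsto_inner_apply hT ?_).eq.symm
    filter_upwards [hl (eventually_ge_atTop m)] with n hmn using hx n a (hS hmn ha)
  exact fun a ha => (closure_minimal hunion (Set.isClosed_centralizer _) ha T rfl).symm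

end WeakOperatorLimits

namespace ErgodicEmbeddings

variable {H : Type*} [NormedAddCommGroup H] [InnerProductSpace ℂ H]

theorem restNorm_nonneg (φ : (H →L[ℂ] H) →L[ℂ] ℂ) (A : Set (H →L[ℂ] H)) : 0 ≤ restNorm φ A :=
  Real.sSup_nonneg fun _ ⟨_, _, _, hr⟩ => hr ▸ norm_nonneg _

theorem restNorm_le {φ : (H →L[ℂ] H) →L[ℂ] ℂ} {A : Set (H →L[ℂ] H)} {ε : ℝ} (hε : 0 ≤ ε)
    (h : ∀ x ∈ A, ‖x‖ ≤ 1 → ‖φ x‖ ≤ ε) : restNorm φ A ≤ ε :=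
  Real.sSup_le (fun _ ⟨x, hx, hx1, hr⟩ => hr ▸ h x hx hx1) hε

theorem tendsto_restNorm_of_mapClusterPt {φ : (H →L[ℂ] H) →L[ℂ] ℂ}
    {A : ℕ → Set (H →L[ℂ] H)} (hA : Antitone A)
    (h : ∀ x : ℕ → H →L[ℂ] H, (∀ n, x n ∈ A n) → (∀ n, ‖x n‖ ≤ 1) →
      MapClusterPt 0 atTop fun n => φ (x n)) :
    Tendsto (fun n => restNorm φ (A n)) atTop (𝓝 0) := by
  refine tendsto_order.2 ⟨fun a ha => .of_forall fun n => ha.trans_le (restNorm_nonneg _ _),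
    fun ε hε => ?_⟩
  by_contra hfreq
  have hbig : ∀ n, ∃ x ∈ A n, ‖x‖ ≤ 1 ∧ ε / 2 < ‖φ x‖ := by
    intro n
    obtain ⟨m, hnm, hm⟩ := frequently_atTop.1 (not_eventually.1 hfreq) n
    by_contra! hsmall
    exact hm <| (restNorm_le (half_pos hε).le fun x hx hx1 => hsmall x (hA hnm hx) hx1).trans_lt
      (half_lt_self hε)
  choose x hxA hx1 hφx using hbig
  obtain ⟨n, hn⟩ := ((h x hxA hx1).frequently (Metric.ball_mem_nhds 0 (half_pos hε))).exists
  exact (hφx n).not_gt (mem_ball_zero_iff.1 hn)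

section

variable {ι : Type*} {l : Filter ι} {x : ι → H →L[ℂ] H} {T : H →L[ℂ] H}

theorem tendsto_vecFunc_apply (hT : ∀ η ζ, Tendsto (fun i => ⟪η, x i ζ⟫_ℂ) l (𝓝 ⟪η, T ζ⟫_ℂ))
    (ξ η : H) : Tendsto (fun i => vecFunc ξ η (x i)) l (𝓝 (vecFunc ξ η T)) :=
  hT η ξ

theorem IsNormalFunctional.tendsto_apply {φ : (H →L[ℂ] H) →L[ℂ] ℂ} (hφ : IsNormalFunctional φ)
    {C : ℝ} (hx : ∀ i, ‖x i‖ ≤ C)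
    (hT : ∀ η ζ, Tendsto (fun i => ⟪η, x i ζ⟫_ℂ) l (𝓝 ⟪η, T ζ⟫_ℂ)) :
    Tendsto (fun i => φ (x i)) l (𝓝 (φ T)) := by
  let S : Submodule ℂ ((H →L[ℂ] H) →L[ℂ] ℂ) :=
    { carrier := {φ | Tendsto (fun i => φ (x i)) l (𝓝 (φ T))}
      add_mem' := fun hφ hψ => hφ.add hψ
      zero_mem' := tendsto_const_nhds
      smul_mem' := fun c _ hφ => hφ.const_smul c }
  have hspan : Submodule.span ℂ (Set.range fun p : H × H => vecFunc p.1 p.2) ≤ S :=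
    Submodule.span_le.2 <| Set.range_subset_iff.2 fun p => tendsto_vecFunc_apply hT p.1 p.2
  exact closure_minimal hspan (isClosed_setOf_tendsto_apply hx) hφ

theorem vecFunc_self_smul_one {ξ : H} (hξ : ‖ξ‖ = 1) (c : ℂ) : vecFunc ξ ξ (c • 1) = c := by
  simp [vecFunc, inner_self_eq_norm_sq_to_K, hξ]

theorem IsFactor.exists_eq_smul_one [CompleteSpace H] {R : VonNeumannAlgebra H}
    (hRfactor : IsFactor R) {S : Set (H →L[ℂ] H)} (hR : (R : Set (H →L[ℂ] H)) = vnGen S)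
    (hTS : T ∈ S.centralizer) (hTR : T ∈ vnGen S) : ∃ c : ℂ, T = c • 1 := by
  refine hRfactor T (by rwa [← SetLike.mem_coe, hR]) ((VonNeumannAlgebra.mem_commutant_iff).2 ?_)
  intro g hg
  rw [← SetLike.mem_coe, hR] at hg
  exact (hg T hTS).symm

end

theorem uhf_vector_states_asymptotically_tracial_general
    {H : Type*} [NormedAddCommGroup H] [InnerProductSpace ℂ H] [CompleteSpace H]
    -- an increasing sequence of matrix factors:
    (B : ℕ → StarSubalgebra ℂ (H →L[ℂ] H)) (hBmono : Monotone B)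
    -- the UHF algebra `B₀` is the norm closure of the union, with unique trace `τ`:
    (τ : (H →L[ℂ] H) →L[ℂ] ℂ) (hτ1 : τ 1 = 1)
    (hτnormal : IsNormalFunctional τ)
    -- `B₀'' = vnGen B₀` is a II₁ factor (with normal faithful trace extending `τ`):
    (R : VonNeumannAlgebra H)
    (hR : (R : Set (H →L[ℂ] H)) = vnGen (closure (⋃ n, (B n : Set (H →L[ℂ] H)))))
    (hRfactor : IsFactor R) :
    ∀ ξ : H, ‖ξ‖ = 1 →
      Filter.Tendsto (fun n => restNorm (τ - vecFunc ξ ξ)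
          (Set.centralizer (B n : Set (H →L[ℂ] H)) ∩
            closure (⋃ m, (B m : Set (H →L[ℂ] H)))))
        Filter.atTop (nhds 0) := by
  intro ξ hξ
  have hB : Monotone fun n => (B n : Set (H →L[ℂ] H)) := fun m n hmn => hBmono hmn
  refine tendsto_restNorm_of_mapClusterPt
    (fun m n hmn => Set.inter_subset_inter_left _ (Set.centralizer_subset (hB hmn)))
    fun x hxA hx1 => ?_
  let U := Ultrafilter.of (atTop : Filter ℕ)
  obtain ⟨T, hT⟩ := exists_tendsto_inner_apply U hx1
  have hTB₀ := mem_centralizer_closure_iUnion_of_tendsto_inner_apply (Ultrafilter.of_le _) hB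
    (fun n => (hxA n).1) hT
  have hTR : T ∈ vnGen (closure (⋃ m, (B m : Set (H →L[ℂ] H)))) := fun z hz =>
    (Commute.of_tendsto_inner_apply hT (.of_forall fun n => (hz (x n) (hxA n).2).symm)).eq
  obtain ⟨c, rfl⟩ := hRfactor.exists_eq_smul_one hR hTB₀ hTR
  have hlim := (hτnormal.tendsto_apply hx1 hT).sub (tendsto_vecFunc_apply hT ξ ξ)
  rw [map_smul, hτ1, vecFunc_self_smul_one hξ, smul_eq_mul, mul_one, sub_self] at hlim
  exact mapClusterPt_iff_ultrafilter.2 ⟨U, Ultrafilter.of_le _, hlim⟩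

/-- Lemma 6.1, 1° ⇒ 2°. -/
theorem uhf_vector_states_asymptotically_tracial
    {H : Type*} [NormedAddCommGroup H] [InnerProductSpace ℂ H] [CompleteSpace H]
    [SecondCountableTopology H]
    -- an increasing sequence of matrix factors:
    (B : ℕ → StarSubalgebra ℂ (H →L[ℂ] H)) (hBmono : Monotone B)
    (hBfin : ∀ n, FiniteDimensional ℂ (Submodule.span ℂ (B n : Set (H →L[ℂ] H))))
    (hBfactor : ∀ n, ∀ x ∈ B n, (∀ y ∈ B n, x * y = y * x) →
      ∃ c : ℂ, x = c • (1 : H →L[ℂ] H))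
    -- the UHF algebra `B₀` is the norm closure of the union, with unique trace `τ`:
    (τ : (H →L[ℂ] H) →L[ℂ] ℂ) (hτ1 : τ 1 = 1)
    (hτtrace : ∀ x ∈ closure (⋃ n, (B n : Set (H →L[ℂ] H))),
      ∀ y ∈ closure (⋃ n, (B n : Set (H →L[ℂ] H))), τ (x * y) = τ (y * x))
    (hτpos : ∀ x, 0 ≤ (τ (star x * x)).re ∧ (τ (star x * x)).im = 0)
    (hτnormal : IsNormalFunctional τ)
    -- `B₀'' = vnGen B₀` is a II₁ factor (with normal faithful trace extending `τ`):
    (R : VonNeumannAlgebra H)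
    (hR : (R : Set (H →L[ℂ] H)) = vnGen (closure (⋃ n, (B n : Set (H →L[ℂ] H)))))
    (hRfactor : IsFactor R)
    (hRinfdim : ¬ FiniteDimensional ℂ (Submodule.span ℂ (R : Set (H →L[ℂ] H))))
    (hRtrace : ∀ x ∈ R, ∀ y ∈ R, τ (x * y) = τ (y * x))
    (hRfaithful : ∀ x ∈ R, τ (star x * x) = 0 → x = 0) :
    ∀ ξ : H, ‖ξ‖ = 1 →
      Filter.Tendsto (fun n => restNorm (τ - vecFunc ξ ξ)
          (Set.centralizer (B n : Set (H →L[ℂ] H)) ∩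
            closure (⋃ m, (B m : Set (H →L[ℂ] H)))))
        Filter.atTop (nhds 0) :=
  uhf_vector_states_asymptotically_tracial_general B hBmono τ hτ1 hτnormal R hR hRfactor

end ErgodicEmbeddings
end
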